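/- For every integer $d \ge 1$, the identity $\sum_{k+m+r=d,\ k,m,r\ge 0} (-1)^r \dfrac{v^{\binom{r+1}{2} - 2(k-1)m}}{[r]!\,[2k]^{!!}\,[2m]^{!!}} = 0$ holds in $\mathbb{Q}(v)$. -/

import Mathlib

noncomputable section

abbrev K : Type := RatFunc ℚ

/-- The indeterminate `v` in `ℚ(v)`. -/
def v : K := RatFunc.X

/-- Quantum integer `[m] = (v^m - v^{-m})/(v - v^{-1})`. -/
def qint (m : ℤ) : K := (v ^ m - v ^ (-m)) / (v - v⁻¹)

/-- Quantum factorial `[r]! = ∏_{i=1}^r [i]`. -/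
def qfact (r : ℕ) : K := ∏ i ∈ Finset.range r, qint ((i : ℤ) + 1)

/-- Quantum double factorial `[2r]!! = ∏_{i=1}^r [2i]`. -/
def qdfact (r : ℕ) : K := ∏ i ∈ Finset.range r, qint (2 * ((i : ℤ) + 1))

/-- Balanced Gaussian binomial coefficient `[m][m-1]⋯[m-r+1]/[r]!`. -/
def qbinom (m : ℤ) (r : ℕ) : K := (∏ i ∈ Finset.range r, qint (m - (i : ℤ))) / qfact r

/-- Gaussian binomial with integer lower index, vanishing for negative lower index. -/
def qbinomZ (m r : ℤ) : K := if 0 ≤ r then qbinom m r.toNat else 0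

/-!
Grouping the terms by `n = k + m`, the sum becomes
`∑_{r+n=d} (-1)^r v^(r(r+1)/2) / [r]! · A n` with
`A n = ∑_{k+m=n} v^(-2(k-1)m) / ([2k]!! [2m]!!)`. Splitting `[2n] = v^(2k) [2m] + v^(-2m) [2k]`
and using the symmetry `k ↔ m` gives `[2n] A n = (v^2 + v^(2-2n)) A (n-1)`, i.e.
`[n] A n = v^(1-n) A (n-1)`, so `A n = v^(2n - n(n+1)/2) / [n]!`. The whole sum is then
`v^(2d - d(d+1)/2) ∑_{r+n=d} (-1)^r v^(r(d-1)) / ([r]! [n]!)`. Splitting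
`[d] = v^n [r] + v^(-r) [n]` in the same way shows that `[d]` times this alternating sum is
`1 - v^(2(d-1))` times the one for `d - 1`; as `[d] ≠ 0` and the factor vanishes at `d = 1`, the
alternating sum is zero for `d ≥ 1`.
-/

open Finset

lemma v_ne_zero : v ≠ 0 := RatFunc.X_ne_zero

lemma intDegree_v_zpow (n : ℤ) : (v ^ n).intDegree = n := by
  induction n using Int.induction_on with
  | zero => simp
  | succ n ih =>
    rw [zpow_add_one₀ v_ne_zero, RatFunc.intDegree_mul (zpow_ne_zero _ v_ne_zero) v_ne_zero, ih,
      v, RatFunc.intDegree_X]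
  | pred n ih =>
    rw [zpow_sub_one₀ v_ne_zero, RatFunc.intDegree_mul (zpow_ne_zero _ v_ne_zero)
      (inv_ne_zero v_ne_zero), ih, RatFunc.intDegree_inv, v, RatFunc.intDegree_X]
    ring

lemma v_zpow_sub_v_zpow_neg_ne_zero {m : ℤ} (hm : m ≠ 0) : v ^ m - v ^ (-m) ≠ 0 := by
  intro h
  have := congrArg RatFunc.intDegree (sub_eq_zero.mp h)
  rw [intDegree_v_zpow, intDegree_v_zpow] at this
  omega

lemma qint_ne_zero {m : ℤ} (hm : m ≠ 0) : qint m ≠ 0 :=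
  div_ne_zero (v_zpow_sub_v_zpow_neg_ne_zero hm)
    (by simpa using v_zpow_sub_v_zpow_neg_ne_zero one_ne_zero)

lemma qint_zero : qint 0 = 0 := by simp [qint]

lemma qint_add (a b : ℤ) : qint (a + b) = v ^ b * qint a + v ^ (-a) * qint b := by
  simp only [qint, neg_add, zpow_add₀ v_ne_zero]
  ring

lemma qint_two_mul (m : ℤ) : qint (2 * m) = qint m * (v ^ m + v ^ (-m)) := by
  simp only [qint, two_mul, neg_add, zpow_add₀ v_ne_zero]
  ring

lemma qfact_succ (r : ℕ) : qfact (r + 1) = qfact r * qint (r + 1) := prod_range_succ _ _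

lemma qfact_ne_zero (r : ℕ) : qfact r ≠ 0 :=
  prod_ne_zero_iff.mpr fun _ _ ↦ qint_ne_zero (by omega)

lemma qdfact_succ (r : ℕ) : qdfact (r + 1) = qdfact r * qint (2 * (r + 1)) :=
  prod_range_succ _ _

lemma qdfact_ne_zero (r : ℕ) : qdfact r ≠ 0 :=
  prod_ne_zero_iff.mpr fun _ _ ↦ qint_ne_zero (by omega)

lemma sum_antidiagonal_succ_add {M : Type*} [AddCommMonoid M] {n : ℕ} {f g : ℕ × ℕ → M}
    (hf : f (0, n + 1) = 0) (hg : g (n + 1, 0) = 0) :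
    ∑ p ∈ antidiagonal (n + 1), (f p + g p) =
      ∑ p ∈ antidiagonal n, (f (p.1 + 1, p.2) + g (p.1, p.2 + 1)) := by
  rw [sum_add_distrib, sum_add_distrib, Nat.sum_antidiagonal_succ, Nat.sum_antidiagonal_succ', hf,
    hg, zero_add, zero_add]

def altTerm (p : ℕ × ℕ) : K :=
  (-1) ^ p.1 * v ^ ((p.1 : ℤ) * (p.1 + p.2 - 1)) / (qfact p.1 * qfact p.2)

lemma qint_mul_altTerm_succ_fst (a b : ℕ) :
    v ^ (b : ℤ) * qint (a + 1) * altTerm (a + 1, b) =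
      -(v ^ (2 * (a + b : ℤ)) * altTerm (a, b)) := by
  have hq : qint ((a : ℤ) + 1) ≠ 0 := qint_ne_zero (by omega)
  simp only [altTerm, qfact_succ, Nat.cast_add, Nat.cast_one, pow_succ]
  field_simp
  simp only [← zpow_add₀ v_ne_zero]
  ring_nf

lemma qint_mul_altTerm_succ_snd (a b : ℕ) :
    v ^ (-(a : ℤ)) * qint (b + 1) * altTerm (a, b + 1) = altTerm (a, b) := by
  have hq : qint ((b : ℤ) + 1) ≠ 0 := qint_ne_zero (by omega)
  simp only [altTerm, qfact_succ, Nat.cast_add, Nat.cast_one]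
  field_simp
  simp only [← zpow_add₀ v_ne_zero]
  ring_nf

lemma qint_mul_sum_altTerm_succ (n : ℕ) :
    qint (n + 1) * ∑ p ∈ antidiagonal (n + 1), altTerm p =
      (1 - v ^ (2 * (n : ℤ))) * ∑ p ∈ antidiagonal n, altTerm p := by
  have hsplit : ∀ p ∈ antidiagonal (n + 1), qint (n + 1) * altTerm p =
      v ^ (p.2 : ℤ) * qint p.1 * altTerm p + v ^ (-(p.1 : ℤ)) * qint p.2 * altTerm p := by
    intro p hp
    have hn : (n : ℤ) + 1 = p.1 + p.2 := by have := mem_antidiagonal.mp hp; omega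
    rw [hn, qint_add]
    ring
  rw [mul_sum, sum_congr rfl hsplit,
    sum_antidiagonal_succ_add (by simp [qint_zero]) (by simp [qint_zero]), mul_sum]
  refine sum_congr rfl fun p hp ↦ ?_
  simp only [Nat.cast_succ, qint_mul_altTerm_succ_fst, qint_mul_altTerm_succ_snd]
  rw [← mem_antidiagonal.mp hp]
  push_cast
  ring

lemma sum_altTerm_succ_eq_zero (n : ℕ) : ∑ p ∈ antidiagonal (n + 1), altTerm p = 0 := by
  refine (mul_eq_zero.mp ?_).resolve_left (qint_ne_zero (m := n + 1) (by omega))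
  rw [qint_mul_sum_altTerm_succ]
  cases n with
  | zero => simp
  | succ n => rw [sum_altTerm_succ_eq_zero n, mul_zero]

def dfactTerm (p : ℕ × ℕ) : K :=
  v ^ (-(2 * ((p.1 : ℤ) - 1) * p.2)) / (qdfact p.1 * qdfact p.2)

lemma dfactTerm_swap (p : ℕ × ℕ) :
    dfactTerm p.swap = v ^ (2 * (p.1 : ℤ) - 2 * p.2) * dfactTerm p := by
  simp only [dfactTerm, Prod.fst_swap, Prod.snd_swap]
  field_simp
  simp only [← zpow_add₀ v_ne_zero]
  ring_nf

lemma qint_mul_dfactTerm_succ_fst (a b : ℕ) :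
    v ^ (-(2 * b : ℤ)) * qint (2 * (a + 1)) * dfactTerm (a + 1, b) =
      v ^ (-(4 * b : ℤ)) * dfactTerm (a, b) := by
  have hq : qint (2 * ((a : ℤ) + 1)) ≠ 0 := qint_ne_zero (by omega)
  simp only [dfactTerm, qdfact_succ, Nat.cast_add, Nat.cast_one]
  field_simp
  simp only [← zpow_add₀ v_ne_zero]
  ring_nf

lemma qint_mul_dfactTerm_succ_snd (a b : ℕ) :
    v ^ (2 * a : ℤ) * qint (2 * (b + 1)) * dfactTerm (a, b + 1) =
      v ^ (2 : ℤ) * dfactTerm (a, b) := by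
  have hq : qint (2 * ((b : ℤ) + 1)) ≠ 0 := qint_ne_zero (by omega)
  simp only [dfactTerm, qdfact_succ, Nat.cast_add, Nat.cast_one]
  field_simp
  simp only [← zpow_natCast, ← zpow_add₀ v_ne_zero]
  ring_nf

lemma sum_zpow_mul_dfactTerm (n : ℕ) :
    ∑ p ∈ antidiagonal n, v ^ (-(4 * p.2 : ℤ)) * dfactTerm p =
      v ^ (-(2 * n : ℤ)) * ∑ p ∈ antidiagonal n, dfactTerm p := by
  rw [← Nat.sum_antidiagonal_swap, mul_sum]
  refine sum_congr rfl fun p hp ↦ ?_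
  rw [dfactTerm_swap, Prod.snd_swap, ← mul_assoc, ← zpow_add₀ v_ne_zero,
    ← mem_antidiagonal.mp hp]
  push_cast
  ring_nf

lemma qint_two_mul_sum_dfactTerm_succ (n : ℕ) :
    qint (2 * (n + 1)) * ∑ p ∈ antidiagonal (n + 1), dfactTerm p =
      (v ^ (2 : ℤ) + v ^ (-(2 * n : ℤ))) * ∑ p ∈ antidiagonal n, dfactTerm p := by
  have hsplit : ∀ p ∈ antidiagonal (n + 1), qint (2 * (n + 1)) * dfactTerm p =
      v ^ (-(2 * p.2 : ℤ)) * qint (2 * p.1) * dfactTerm p +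
        v ^ (2 * p.1 : ℤ) * qint (2 * p.2) * dfactTerm p := by
    intro p hp
    have hn : (n : ℤ) + 1 = p.1 + p.2 := by have := mem_antidiagonal.mp hp; omega
    rw [hn, mul_add, add_comm, qint_add]
    ring
  rw [mul_sum, sum_congr rfl hsplit,
    sum_antidiagonal_succ_add (by simp [qint_zero]) (by simp [qint_zero])]
  simp only [Nat.cast_succ, qint_mul_dfactTerm_succ_fst, qint_mul_dfactTerm_succ_snd,
    sum_add_distrib, sum_zpow_mul_dfactTerm, ← mul_sum]
  ring

lemma qint_mul_sum_dfactTerm_succ (n : ℕ) :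
    qint (n + 1) * ∑ p ∈ antidiagonal (n + 1), dfactTerm p =
      v ^ (1 - n : ℤ) * ∑ p ∈ antidiagonal n, dfactTerm p := by
  have h := qint_two_mul_sum_dfactTerm_succ n
  have hq := qint_ne_zero (m := 2 * (n + 1)) (by omega)
  rw [qint_two_mul] at h hq
  have hv : v ^ (2 : ℤ) + v ^ (-(2 * n : ℤ)) =
      v ^ (1 - n : ℤ) * (v ^ ((n : ℤ) + 1) + v ^ (-((n : ℤ) + 1))) := by
    simp only [mul_add, ← zpow_add₀ v_ne_zero]
    ring_nf
  rw [hv] at h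
  apply mul_left_cancel₀ (right_ne_zero_of_mul hq)
  linear_combination h

lemma two_mul_triangle (n : ℕ) : 2 * ((n * (n + 1) / 2 : ℕ) : ℤ) = n * (n + 1) := by
  exact_mod_cast Nat.mul_div_cancel' (Nat.even_mul_succ_self n).two_dvd

def dfactExp (n : ℕ) : ℤ := 2 * n - (n * (n + 1) / 2 : ℕ)

lemma dfactExp_succ (n : ℕ) : dfactExp (n + 1) = dfactExp n + (1 - n) := by
  have h0 := two_mul_triangle n
  have h1 := two_mul_triangle (n + 1)
  push_cast [dfactExp] at *
  linarith

lemma triangle_add_dfactExp (r n : ℕ) :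
    ((r * (r + 1) / 2 : ℕ) : ℤ) + dfactExp n = dfactExp (r + n) + r * (r + n - 1) := by
  have hr := two_mul_triangle r
  have hn := two_mul_triangle n
  have hrn := two_mul_triangle (r + n)
  push_cast [dfactExp] at *
  linarith

lemma qfact_mul_sum_dfactTerm (n : ℕ) :
    qfact n * ∑ p ∈ antidiagonal n, dfactTerm p = v ^ dfactExp n := by
  induction n with
  | zero => simp [qfact, dfactTerm, qdfact, dfactExp]
  | succ n ih =>
    rw [qfact_succ, mul_assoc, qint_mul_sum_dfactTerm_succ, mul_left_comm, ih, dfactExp_succ,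
      zpow_add₀ v_ne_zero, mul_comm]

lemma sum_dfactTerm (n : ℕ) : ∑ p ∈ antidiagonal n, dfactTerm p = v ^ dfactExp n / qfact n :=
  eq_div_of_mul_eq (qfact_ne_zero n) (by rw [mul_comm, qfact_mul_sum_dfactTerm])

theorem stmt2 (d : ℕ) (hd : 1 ≤ d) :
    ∑ k ∈ Finset.range (d + 1), ∑ m ∈ Finset.range (d + 1 - k),
      (-1 : K) ^ (d - k - m) *
        v ^ ((((d - k - m) * (d - k - m + 1) / 2 : ℕ) : ℤ)
              - 2 * ((k : ℤ) - 1) * (m : ℤ)) /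
        (qfact (d - k - m) * qdfact k * qdfact m)
    = 0 := by
  rw [← sum_range_diag_flip]
  have hinner : ∀ n ∈ range (d + 1), ∑ k ∈ range (n + 1), (-1 : K) ^ (d - k - (n - k)) *
      v ^ ((((d - k - (n - k)) * (d - k - (n - k) + 1) / 2 : ℕ) : ℤ) -
        2 * ((k : ℤ) - 1) * ((n - k : ℕ) : ℤ)) /
      (qfact (d - k - (n - k)) * qdfact k * qdfact (n - k)) =
        v ^ dfactExp d * altTerm (d - n, n) := by
    intro n hn
    obtain ⟨r, rfl⟩ := Nat.exists_eq_add_of_le' (Nat.lt_succ_iff.mp (mem_range.mp hn))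
    calc _ = (-1) ^ r * v ^ ((r * (r + 1) / 2 : ℕ) : ℤ) / qfact r *
            ∑ p ∈ antidiagonal n, dfactTerm p := by
          rw [Nat.sum_antidiagonal_eq_sum_range_succ (fun k m ↦ dfactTerm (k, m)), mul_sum]
          refine sum_congr rfl fun k hk ↦ ?_
          rw [show r + n - k - (n - k) = r by have := mem_range.mp hk; omega, sub_eq_add_neg,
            zpow_add₀ v_ne_zero, dfactTerm]
          ring
      _ = _ := by
          rw [sum_dfactTerm, Nat.add_sub_cancel, altTerm]
          field_simp
          rw [← zpow_add₀ v_ne_zero, ← zpow_add₀ v_ne_zero, triangle_add_dfactExp]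
  rw [sum_congr rfl hinner, ← mul_sum,
    ← Nat.sum_antidiagonal_eq_sum_range_succ (fun a b ↦ altTerm (b, a))]
  obtain ⟨n, rfl⟩ := Nat.exists_eq_add_of_le' hd
  exact mul_eq_zero_of_right _ (Nat.sum_antidiagonal_swap.trans (sum_altTerm_succ_eq_zero n))
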